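/- Let M be a finite set of items, let n agents have valuations v_1, …, v_n on subsets of M, and let s be a proper share function: s assigns to each valuation v and each entitlement t ∈ (0,1) a real value s(v, t), and s(v, t) is nondecreasing in t. Call a partition (A_1, …, A_n) of M acceptable for an entitlement vector b if v_j(A_j) ≥ s(v_j, b_j) for every agent j. Suppose b and b' are entitlement vectors with b i-improving b' (b_i > b'_i and b_j ≤ b'_j for all j ≠ i), and suppose that the sets of acceptable allocations for b and for b' are both nonempty. Then there exists an allocation A acceptable for b such that v_i(A_i) ≥ v_i(A'_i) for every allocation A' acceptable for b'. (Every fairness notion based on a proper share is upper monotone.) -/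

import Mathlib

/-!
Among the allocations acceptable for `b`, take one maximising agent `i`'s value. Passing from
`b'` to `b` only lowers the entitlements, hence the shares, of the agents other than `i`, so an
allocation acceptable for `b'` that gave `i` more would be acceptable for `b` too, contradicting
maximality; one that gives `i` less than her `b`-share is beaten by any `b`-acceptable allocation.
-/

def IsPartition {n m : ℕ} (A : Fin n → Finset (Fin m)) : Prop :=
  (∀ i j, i ≠ j → Disjoint (A i) (A j)) ∧ ∀ e, ∃ i, e ∈ A i

lemma lt_one_of_sum_eq_one {ι : Type*} [Fintype ι] {c : ι → ℝ} (hc : ∀ k, 0 < c k)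
    (hsum : ∑ k, c k = 1) {i j : ι} (hji : j ≠ i) : c j < 1 :=
  hsum ▸ Finset.single_lt_sum hji.symm (Finset.mem_univ j) (Finset.mem_univ i) (hc i)
    fun k _ _ => (hc k).le

lemma share_le_share_of_le {ι : Type*} [Fintype ι] {f : ℝ → ℝ}
    (hf : MonotoneOn f (Set.Ioo 0 1)) {b b' : ι → ℝ} (hb : ∀ j, 0 < b j) (hb' : ∀ j, 0 < b' j)
    (hb'sum : ∑ j, b' j = 1) {i j : ι} (hji : j ≠ i) (hle : b j ≤ b' j) : f (b j) ≤ f (b' j) :=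
  have hb'j : b' j < 1 := lt_one_of_sum_eq_one hb' hb'sum hji
  hf ⟨hb j, hle.trans_lt hb'j⟩ ⟨hb' j, hb'j⟩ hle

section Acceptable

variable {n m : ℕ} {s : (Finset (Fin m) → ℝ) → ℝ → ℝ} {v : Fin n → Finset (Fin m) → ℝ}

def IsAcceptable (s : (Finset (Fin m) → ℝ) → ℝ → ℝ) (v : Fin n → Finset (Fin m) → ℝ)
    (b : Fin n → ℝ) (A : Fin n → Finset (Fin m)) : Prop :=
  IsPartition A ∧ ∀ j, s (v j) (b j) ≤ v j (A j)

lemma IsAcceptable.of_share_le {b b' : Fin n → ℝ} {A : Fin n → Finset (Fin m)} {i : Fin n}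
    (hA : IsAcceptable s v b' A) (hi : s (v i) (b i) ≤ v i (A i))
    (hshare : ∀ j ≠ i, s (v j) (b j) ≤ s (v j) (b' j)) : IsAcceptable s v b A := by
  refine ⟨hA.1, fun j => ?_⟩
  rcases eq_or_ne j i with rfl | hj
  · exact hi
  · exact (hshare j hj).trans (hA.2 j)

lemma exists_isAcceptable_max_value (b : Fin n → ℝ) (i : Fin n)
    (hne : ∃ A, IsAcceptable s v b A) :
    ∃ A, IsAcceptable s v b A ∧ ∀ A', IsAcceptable s v b A' → v i (A' i) ≤ v i (A i) :=
  Set.exists_max_image {A | IsAcceptable s v b A} (fun A => v i (A i)) (Set.toFinite _) hne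

end Acceptable

theorem stmt_8_general (n m : ℕ) (v : Fin n → Finset (Fin m) → ℝ)
    (s : (Finset (Fin m) → ℝ) → ℝ → ℝ)
    (hs : ∀ u : Finset (Fin m) → ℝ, ∀ t t' : ℝ,
      0 < t → t < 1 → 0 < t' → t' < 1 → t ≤ t' → s u t ≤ s u t')
    (b b' : Fin n → ℝ)
    (hb : ∀ j, 0 < b j)
    (hb' : ∀ j, 0 < b' j) (hb'sum : ∑ j, b' j = 1)
    (i : Fin n)
    (himp2 : ∀ j, j ≠ i → b j ≤ b' j)
    (hne : ∃ A : Fin n → Finset (Fin m),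
      IsPartition A ∧ ∀ j, s (v j) (b j) ≤ v j (A j)) :
    ∃ A : Fin n → Finset (Fin m),
      (IsPartition A ∧ ∀ j, s (v j) (b j) ≤ v j (A j)) ∧
      ∀ A' : Fin n → Finset (Fin m),
        (IsPartition A' ∧ ∀ j, s (v j) (b' j) ≤ v j (A' j)) →
        v i (A' i) ≤ v i (A i) := by
  have hshare : ∀ j ≠ i, s (v j) (b j) ≤ s (v j) (b' j) := fun j hj =>
    share_le_share_of_le (fun _ ht _ ht' htt' => hs (v j) _ _ ht.1 ht.2 ht'.1 ht'.2 htt')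
      hb hb' hb'sum hj (himp2 j hj)
  obtain ⟨A, hA, hmax⟩ := exists_isAcceptable_max_value b i hne
  refine ⟨A, hA, fun A' hA' => ?_⟩
  by_cases hi : s (v i) (b i) ≤ v i (A' i)
  · exact hmax A' (IsAcceptable.of_share_le hA' hi hshare)
  · exact (not_le.mp hi).le.trans (hA.2 i)

/-- Every fairness notion based on a proper share (a share
function `s(v, t)` nondecreasing in the entitlement `t ∈ (0,1)`) is upper
monotone: if `b` i-improves `b'` and both acceptance sets are nonempty, then
some allocation acceptable for `b` gives agent `i` at least as much value as
every allocation acceptable for `b'`. -/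
theorem stmt_8 (n m : ℕ) (v : Fin n → Finset (Fin m) → ℝ)
    (s : (Finset (Fin m) → ℝ) → ℝ → ℝ)
    (hs : ∀ u : Finset (Fin m) → ℝ, ∀ t t' : ℝ,
      0 < t → t < 1 → 0 < t' → t' < 1 → t ≤ t' → s u t ≤ s u t')
    (b b' : Fin n → ℝ)
    (hb : ∀ j, 0 < b j) (hbsum : ∑ j, b j = 1)
    (hb' : ∀ j, 0 < b' j) (hb'sum : ∑ j, b' j = 1)
    (i : Fin n)
    (himp1 : b' i < b i) (himp2 : ∀ j, j ≠ i → b j ≤ b' j)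
    (hne : ∃ A : Fin n → Finset (Fin m),
      IsPartition A ∧ ∀ j, s (v j) (b j) ≤ v j (A j))
    (hne' : ∃ A' : Fin n → Finset (Fin m),
      IsPartition A' ∧ ∀ j, s (v j) (b' j) ≤ v j (A' j)) :
    ∃ A : Fin n → Finset (Fin m),
      (IsPartition A ∧ ∀ j, s (v j) (b j) ≤ v j (A j)) ∧
      ∀ A' : Fin n → Finset (Fin m),
        (IsPartition A' ∧ ∀ j, s (v j) (b' j) ≤ v j (A' j)) →
        v i (A' i) ≤ v i (A i) :=
  stmt_8_general n m v s hs b b' hb hb' hb'sum i himp2 hne
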